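/- Consider the 3-element groupoid G = {0,1,2} with * given by: 0*0=0, 0*1=0, 0*2=0; 1*0=0, 1*1=1, 1*2=0; 2*0=0, 2*1=0, 2*2=1 (groupoid SC79). Then * satisfies the identities x*y = y*x and ((w*x)*y)*z = ((w*x)*z)*y. Moreover, for full linear terms s, t over x_1,…,x_n: if {x_i, x_j} are eggs of a nest in s but not eggs of any nest in t, then under the assignment h(x_i) = h(x_j) = 2 and h(x) = 1 for all other variables, h(s) = 1 and h(t) = 0; hence s^* ≠ t^*. -/

import Mathlib

/-- Terms (fully parenthesized products) over variables `x_1,…,x_n`. -/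
inductive Term (n : ℕ) : Type
  | var : Fin n → Term n
  | mul : Term n → Term n → Term n

namespace Term

variable {n : ℕ} {G : Type*}

/-- Evaluation of a term in a groupoid `(G, op)` under an assignment `h`. -/
def eval (op : G → G → G) (h : Fin n → G) : Term n → G
  | var i => h i
  | mul s t => op (eval op h s) (eval op h t)

/-- The list of variable indices at the leaves, from left to right. -/
def leaves : Term n → List (Fin n)
  | var i => [i]
  | mul s t => leaves s ++ leaves t

/-- The leftmost variable of a term. -/
def leftVar : Term n → Fin n
  | var i => i
  | mul s _ => leftVar s

/-- The factors `t_1, …, t_m` of the leftmost decomposition `t = [t_0, t_1, …, t_m]`. -/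
def lmFactors : Term n → List (Term n)
  | var _ => []
  | mul s t => lmFactors s ++ [t]

/-- The left depth of the leftmost leaf of a term. -/
def leftDepth : Term n → ℕ
  | var _ => 0
  | mul s _ => leftDepth s + 1

/-- A bracketing of the word `x_1 x_2 ⋯ x_n`. -/
def IsBracketing (t : Term n) : Prop := t.leaves = List.finRange n

/-- A full linear term over `x_1, …, x_n`: each variable occurs exactly once. -/
def IsLinear (t : Term n) : Prop := t.leaves.Perm (List.finRange n)

end Term

/-- Leftmost bracketing `[t_0, t_1, …, t_m]`. -/
def lmBr {n : ℕ} (t0 : Term n) (l : List (Term n)) : Term n := l.foldl Term.mul t0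

/-- Leftmost bracketing of variables `[x_i, x_{j_1}, …, x_{j_k}]`. -/
def lBr {n : ℕ} (i : Fin n) (l : List (Fin n)) : Term n :=
  l.foldl (fun s j => Term.mul s (Term.var j)) (Term.var i)

/-- Rightmost bracketing of variables `⟨x_i, x_{j_1}, …, x_{j_k}⟩`. -/
def rmBr {n : ℕ} (i : Fin n) : List (Fin n) → Term n
  | [] => Term.var i
  | j :: l => Term.mul (Term.var i) (rmBr j l)

/-- `n`-th term of the associative spectrum: the number of distinct `n`-ary operations
induced by bracketings of `x_1 ⋯ x_n`. -/
noncomputable def assocSpec {G : Type*} (op : G → G → G) (n : ℕ) : ℕ :=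
  Set.ncard {f : (Fin n → G) → G | ∃ t : Term n, t.IsBracketing ∧ f = fun h => t.eval op h}

/-- `n`-th term of the ac-spectrum: the number of distinct `n`-ary operations
induced by full linear terms over `x_1, …, x_n`. -/
noncomputable def acSpec {G : Type*} (op : G → G → G) (n : ℕ) : ℕ :=
  Set.ncard {f : (Fin n → G) → G | ∃ t : Term n, t.IsLinear ∧ f = fun h => t.eval op h}
/-- Bell numbers. -/
def bell : ℕ → ℕ
  | 0 => 1
  | n + 1 => ∑ k : Fin (n + 1), Nat.choose n k * bell k
  decreasing_by exact k.isLt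

/-- Ordered Bell (Fubini) numbers. -/
def fubini : ℕ → ℕ
  | 0 => 1
  | n + 1 => ∑ k : Fin (n + 1), Nat.choose (n + 1) k * fubini k
  decreasing_by exact k.isLt

/-- Number of partitions of an `n`-set into blocks of size at most 2. -/
def bell2 : ℕ → ℕ
  | 0 => 1
  | 1 => 1
  | n + 2 => bell2 (n + 1) + (n + 1) * bell2 n

/-- The set of egg-pairs of (maximal nests of) a term. -/
def Term.eggs {n : ℕ} : Term n → Finset (Finset (Fin n))
  | .var _ => ∅
  | .mul (.var i) (.var j) => {({i, j} : Finset (Fin n))}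
  | .mul s t => Term.eggs s ∪ Term.eggs t


/-- Groupoid SC79 on `{0,1,2}`. -/
def sc79 : Fin 3 → Fin 3 → Fin 3 := fun a b => ![![0, 0, 0], ![0, 1, 0], ![0, 0, 1]] a b

set_option linter.unreachableTactic false in
set_option linter.unusedTactic false in
lemma eggs_mul_cases {n : ℕ} (s u : Term n) (p : Finset (Fin n))
    (hp : p ∈ (Term.mul s u).eggs) :
    p ∈ s.eggs ∨ p ∈ u.eggs ∨ ∃ a b, s = Term.var a ∧ u = Term.var b ∧ p = {a, b} := by
  cases s <;> cases u <;> simp_all [Term.eggs] <;> tauto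

lemma eggs_left {n : ℕ} (s u : Term n) : s.eggs ⊆ (Term.mul s u).eggs := by
  cases s <;> cases u <;> simp [Term.eggs]

lemma eggs_right {n : ℕ} (s u : Term n) : u.eggs ⊆ (Term.mul s u).eggs := by
  cases s <;> cases u <;> simp [Term.eggs]

lemma mem_leaves_of_mem_eggs {n : ℕ} (t : Term n) (p : Finset (Fin n)) (hp : p ∈ t.eggs)
    (a : Fin n) (ha : a ∈ p) : a ∈ t.leaves := by
  induction t with
  | var i => simp [Term.eggs] at hp
  | mul s u ihs ihu =>
    simp only [Term.leaves, List.mem_append]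
    rcases eggs_mul_cases s u p hp with h | h | ⟨b, c, rfl, rfl, rfl⟩
    · exact Or.inl (ihs h)
    · exact Or.inr (ihu h)
    · rcases Finset.mem_insert.mp ha with rfl | h
      · exact Or.inl (by simp [Term.leaves])
      · exact Or.inr (by simp [Term.leaves, Finset.mem_singleton.mp h])

lemma sc79_zero_left : ∀ a, sc79 0 a = 0 := by decide
lemma sc79_zero_right : ∀ a, sc79 a 0 = 0 := by decide

lemma sc79_key {n : ℕ} (i j : Fin n) (hij : i ≠ j) (t : Term n) (hnd : t.leaves.Nodup) :
    (i ∉ t.leaves → j ∉ t.leaves →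
      t.eval sc79 (fun x => if x = i ∨ x = j then 2 else 1) = 1) ∧
    (i ∈ t.leaves → j ∉ t.leaves →
      (t = Term.var i ∧ t.eval sc79 (fun x => if x = i ∨ x = j then 2 else 1) = 2) ∨
        t.eval sc79 (fun x => if x = i ∨ x = j then 2 else 1) = 0) ∧
    (j ∈ t.leaves → i ∉ t.leaves →
      (t = Term.var j ∧ t.eval sc79 (fun x => if x = i ∨ x = j then 2 else 1) = 2) ∨
        t.eval sc79 (fun x => if x = i ∨ x = j then 2 else 1) = 0) ∧
    (i ∈ t.leaves → j ∈ t.leaves →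
      (({i, j} : Finset (Fin n)) ∈ t.eggs ∧
        t.eval sc79 (fun x => if x = i ∨ x = j then 2 else 1) = 1) ∨
      (({i, j} : Finset (Fin n)) ∉ t.eggs ∧
        t.eval sc79 (fun x => if x = i ∨ x = j then 2 else 1) = 0)) := by
  induction t with
  | var k =>
    refine ⟨?_, ?_, ?_, ?_⟩
    · intro hi hj
      simp only [Term.leaves, List.mem_singleton] at hi hj
      simp [Term.eval, Ne.symm hi, Ne.symm hj]
    · intro hi _
      simp only [Term.leaves, List.mem_singleton] at hi
      subst hi
      exact Or.inl ⟨rfl, by simp [Term.eval]⟩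
    · intro hj _
      simp only [Term.leaves, List.mem_singleton] at hj
      subst hj
      exact Or.inl ⟨rfl, by simp [Term.eval]⟩
    · intro hi hj
      simp only [Term.leaves, List.mem_singleton] at hi hj
      exact absurd (hi.trans hj.symm) hij
  | mul s u ihs ihu =>
    simp only [Term.leaves, List.nodup_append] at hnd
    obtain ⟨hs, hu, hdisj⟩ := hnd
    obtain ⟨S1, S2, S3, S4⟩ := ihs hs
    obtain ⟨U1, U2, U3, U4⟩ := ihu hu
    simp only [Term.leaves, List.mem_append, Term.eval]
    refine ⟨?_, ?_, ?_, ?_⟩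
    · intro hi hj
      push_neg at hi hj
      rw [S1 hi.1 hj.1, U1 hi.2 hj.2]; decide
    · intro hi hj
      push_neg at hj
      right
      rcases hi with hi | hi
      · have hiu : i ∉ u.leaves := fun h => hdisj _ hi _ h rfl
        rw [U1 hiu hj.2]
        rcases S2 hi hj.1 with ⟨_, h2⟩ | h0
        · rw [h2]; decide
        · rw [h0]; decide
      · have his : i ∉ s.leaves := fun h => hdisj _ h _ hi rfl
        rw [S1 his hj.1]
        rcases U2 hi hj.2 with ⟨_, h2⟩ | h0
        · rw [h2]; decide
        · rw [h0]; decide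
    · intro hj hi
      push_neg at hi
      right
      rcases hj with hj | hj
      · have hju : j ∉ u.leaves := fun h => hdisj _ hj _ h rfl
        rw [U1 hi.2 hju]
        rcases S3 hj hi.1 with ⟨_, h2⟩ | h0
        · rw [h2]; decide
        · rw [h0]; decide
      · have hjs : j ∉ s.leaves := fun h => hdisj _ h _ hj rfl
        rw [S1 hi.1 hjs]
        rcases U3 hj hi.2 with ⟨_, h2⟩ | h0
        · rw [h2]; decide
        · rw [h0]; decide
    · intro hi hj
      rcases hi with hi | hi <;> rcases hj with hj | hj
      · -- both in s
        have hiu : i ∉ u.leaves := fun h => hdisj _ hi _ h rfl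
        have hju : j ∉ u.leaves := fun h => hdisj _ hj _ h rfl
        rw [U1 hiu hju]
        rcases S4 hi hj with ⟨he, h1⟩ | ⟨he, h0⟩
        · exact Or.inl ⟨eggs_left s u he, by rw [h1]; decide⟩
        · refine Or.inr ⟨?_, by rw [h0]; decide⟩
          intro hmem
          rcases eggs_mul_cases s u _ hmem with h' | h' | ⟨a, b, rfl, rfl, _⟩
          · exact he h'
          · exact hiu (mem_leaves_of_mem_eggs u _ h' i (by simp))
          · simp only [Term.leaves, List.mem_singleton] at hi hj
            exact hij (hi.trans hj.symm)
      · -- i in s, j in u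
        have hiu : i ∉ u.leaves := fun h => hdisj _ hi _ h rfl
        have hjs : j ∉ s.leaves := fun h => hdisj _ h _ hj rfl
        rcases S2 hi hjs with ⟨rfl, hs2⟩ | hs0
        · rcases U3 hj hiu with ⟨rfl, hu2⟩ | hu0
          · exact Or.inl ⟨by simp [Term.eggs], by rw [hs2, hu2]; decide⟩
          · refine Or.inr ⟨?_, by rw [hs2, hu0]; decide⟩
            intro hmem
            rcases eggs_mul_cases _ u _ hmem with h' | h' | ⟨a, b, h1, rfl, _⟩
            · simp [Term.eggs] at h'
            · exact hiu (mem_leaves_of_mem_eggs u _ h' i (by simp))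
            · simp only [Term.leaves, List.mem_singleton] at hj
              subst hj
              exact absurd hu0 (by simp [Term.eval])
        · refine Or.inr ⟨?_, by rw [hs0]; exact sc79_zero_left _⟩
          intro hmem
          rcases eggs_mul_cases s u _ hmem with h' | h' | ⟨a, b, rfl, rfl, _⟩
          · exact hjs (mem_leaves_of_mem_eggs s _ h' j (by simp))
          · exact hiu (mem_leaves_of_mem_eggs u _ h' i (by simp))
          · simp only [Term.leaves, List.mem_singleton] at hi
            subst hi
            exact absurd hs0 (by simp [Term.eval])
      · -- j in s, i in u
        have hju : j ∉ u.leaves := fun h => hdisj _ hj _ h rfl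
        have his : i ∉ s.leaves := fun h => hdisj _ h _ hi rfl
        rcases S3 hj his with ⟨rfl, hs2⟩ | hs0
        · rcases U2 hi hju with ⟨rfl, hu2⟩ | hu0
          · refine Or.inl ⟨?_, by rw [hs2, hu2]; decide⟩
            have : ({j, i} : Finset (Fin n)) = {i, j} := Finset.pair_comm j i
            simp [Term.eggs, ← this]
          · refine Or.inr ⟨?_, by rw [hs2, hu0]; decide⟩
            intro hmem
            rcases eggs_mul_cases _ u _ hmem with h' | h' | ⟨a, b, h1, rfl, _⟩
            · simp [Term.eggs] at h'
            · exact hju (mem_leaves_of_mem_eggs u _ h' j (by simp))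
            · simp only [Term.leaves, List.mem_singleton] at hi
              subst hi
              exact absurd hu0 (by simp [Term.eval])
        · refine Or.inr ⟨?_, by rw [hs0]; exact sc79_zero_left _⟩
          intro hmem
          rcases eggs_mul_cases s u _ hmem with h' | h' | ⟨a, b, rfl, rfl, _⟩
          · exact his (mem_leaves_of_mem_eggs s _ h' i (by simp))
          · exact hju (mem_leaves_of_mem_eggs u _ h' j (by simp))
          · simp only [Term.leaves, List.mem_singleton] at hj
            subst hj
            exact absurd hs0 (by simp [Term.eval])
      · -- both in u
        have his : i ∉ s.leaves := fun h => hdisj _ h _ hi rfl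
        have hjs : j ∉ s.leaves := fun h => hdisj _ h _ hj rfl
        rw [S1 his hjs]
        rcases U4 hi hj with ⟨he, h1⟩ | ⟨he, h0⟩
        · exact Or.inl ⟨eggs_right s u he, by rw [h1]; decide⟩
        · refine Or.inr ⟨?_, by rw [h0]; decide⟩
          intro hmem
          rcases eggs_mul_cases s u _ hmem with h' | h' | ⟨a, b, rfl, rfl, _⟩
          · exact his (mem_leaves_of_mem_eggs s _ h' i (by simp))
          · exact he h'
          · simp only [Term.leaves, List.mem_singleton] at hi hj
            exact hij (hi.trans hj.symm)

/-- SC79 satisfies `xy ≈ yx` and `((wx)y)z ≈ ((wx)z)y`, and the indicated assignment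
separates full linear terms with distinct egg-pair sets. -/
theorem sc79_separates_eggs (n : ℕ) :
    (∀ x y : Fin 3, sc79 x y = sc79 y x) ∧
    (∀ w x y z : Fin 3, sc79 (sc79 (sc79 w x) y) z = sc79 (sc79 (sc79 w x) z) y) ∧
    (∀ (s t : Term n) (i j : Fin n), s.IsLinear → t.IsLinear → i ≠ j →
      ({i, j} : Finset (Fin n)) ∈ s.eggs → ({i, j} : Finset (Fin n)) ∉ t.eggs →
      s.eval sc79 (fun x => if x = i ∨ x = j then 2 else 1) = 1 ∧
      t.eval sc79 (fun x => if x = i ∨ x = j then 2 else 1) = 0 ∧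
      (fun h => s.eval sc79 h) ≠ (fun h => t.eval sc79 h)) := by
  
  refine ⟨by decide, by decide, ?_⟩
  intro s t i j hslin htlin hij hmem hnmem
  have hnds : s.leaves.Nodup := hslin.nodup_iff.mpr (List.nodup_finRange n)
  have hndt : t.leaves.Nodup := htlin.nodup_iff.mpr (List.nodup_finRange n)
  have his : i ∈ s.leaves := hslin.mem_iff.mpr (List.mem_finRange i)
  have hjs : j ∈ s.leaves := hslin.mem_iff.mpr (List.mem_finRange j)
  have hit : i ∈ t.leaves := htlin.mem_iff.mpr (List.mem_finRange i)
  have hjt : j ∈ t.leaves := htlin.mem_iff.mpr (List.mem_finRange j)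
  have hs1 : s.eval sc79 (fun x => if x = i ∨ x = j then 2 else 1) = 1 := by
    rcases (sc79_key i j hij s hnds).2.2.2 his hjs with ⟨_, h⟩ | ⟨h, _⟩
    · exact h
    · exact absurd hmem h
  have ht0 : t.eval sc79 (fun x => if x = i ∨ x = j then 2 else 1) = 0 := by
    rcases (sc79_key i j hij t hndt).2.2.2 hit hjt with ⟨h, _⟩ | ⟨_, h⟩
    · exact absurd h hnmem
    · exact h
  refine ⟨hs1, ht0, ?_⟩
  intro hfun
  have := congrFun hfun (fun x => if x = i ∨ x = j then 2 else 1)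
  rw [hs1, ht0] at this
  exact absurd this (by decide)
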